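/- arXiv:2605.27814 — 6 statements merged into one kernel-verified Lean document; each statement's English description precedes it below -/
import Mathlib

section
/- Let x ∈ R^n, α > 0, Λ > 0, d_max > 0. If D = {d_1,...,d_p} ⊂ R^n is a Λ-PSS for B(x,α) and ‖d_i‖ ≤ d_max·α for all i, then the cosine measure of D satisfies cm(D) ≥ 1/(d_max·Λ). -/
open RealInnerProductSpace

/-- If D = {d₁,…,d_p} is a Λ-PSS for B(x,α) and ‖dᵢ‖ ≤ d_max·α for all i,
then cm(D) ≥ 1/(d_max·Λ), i.e. for every nonzero v there is a nonzero dᵢ with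
dᵢᵀv / (‖dᵢ‖‖v‖) ≥ 1/(d_max·Λ). -/
theorem lambda_pss_implies_cosine_measure (n p : ℕ)
    (x : EuclideanSpace ℝ (Fin n)) (α Λ dmax : ℝ)
    (hα : 0 < α) (hΛ : 0 < Λ) (hdmax : 0 < dmax)
    (d : Fin p → EuclideanSpace ℝ (Fin n))
    (hPSS : ∀ v : EuclideanSpace ℝ (Fin n), ‖v‖ ≤ α →
      ∃ c : Fin p → ℝ, (∀ i, 0 ≤ c i) ∧ v = ∑ i, c i • d i ∧ ∑ i, c i ≤ Λ)
    (hnorm : ∀ i, ‖d i‖ ≤ dmax * α) :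
    ∀ v : EuclideanSpace ℝ (Fin n), v ≠ 0 →
      ∃ i, d i ≠ 0 ∧ (1 / (dmax * Λ)) * (‖d i‖ * ‖v‖) ≤ ⟪d i, v⟫ := by
  intro v hv
  have hvnorm : 0 < ‖v‖ := norm_pos_iff.mpr hv
  set u : EuclideanSpace ℝ (Fin n) := (α / ‖v‖) • v with hu
  have hunorm : ‖u‖ = α := by
    rw [hu, norm_smul, Real.norm_eq_abs, abs_of_pos (div_pos hα hvnorm)]
    field_simp
  obtain ⟨c, hc0, hsum, hcΛ⟩ := hPSS u (le_of_eq hunorm)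
  -- key: some i with α²/Λ ≤ ⟪d i, u⟫
  have key : ∃ i, α ^ 2 / Λ ≤ ⟪d i, u⟫ := by
    by_contra h
    push_neg at h
    have hinner : α ^ 2 = ∑ i, c i * ⟪d i, u⟫ := by
      calc α ^ 2 = ⟪u, u⟫ := by rw [real_inner_self_eq_norm_sq, hunorm]
        _ = ⟪∑ i, c i • d i, u⟫ := by rw [← hsum]
        _ = ∑ i, c i * ⟪d i, u⟫ := by
            rw [sum_inner]
            exact Finset.sum_congr rfl fun i _ => real_inner_smul_left _ _ _
    have hune : ∃ j, c j ≠ 0 := by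
      by_contra hall
      push_neg at hall
      have : u = 0 := by rw [hsum]; simp [hall]
      rw [this, norm_zero] at hunorm
      exact hα.ne' hunorm.symm
    obtain ⟨j, hj⟩ := hune
    have hjpos : 0 < c j := lt_of_le_of_ne (hc0 j) (Ne.symm hj)
    have hlt : ∑ i, c i * ⟪d i, u⟫ < ∑ i, c i * (α ^ 2 / Λ) := by
      apply Finset.sum_lt_sum
      · intro i _
        exact mul_le_mul_of_nonneg_left (le_of_lt (h i)) (hc0 i)
      · exact ⟨j, Finset.mem_univ j, by
          exact mul_lt_mul_of_pos_left (h j) hjpos⟩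
    have hle : ∑ i, c i * (α ^ 2 / Λ) ≤ α ^ 2 := by
      rw [← Finset.sum_mul]
      calc (∑ i, c i) * (α ^ 2 / Λ) ≤ Λ * (α ^ 2 / Λ) := by
            exact mul_le_mul_of_nonneg_right hcΛ (le_of_lt (div_pos (pow_pos hα 2) hΛ))
        _ = α ^ 2 := by field_simp
    linarith
  obtain ⟨i, hi⟩ := key
  have hpos : 0 < ⟪d i, u⟫ := lt_of_lt_of_le (div_pos (pow_pos hα 2) hΛ) hi
  have hdne : d i ≠ 0 := by
    intro h0
    rw [h0, inner_zero_left] at hpos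
    exact lt_irrefl 0 hpos
  refine ⟨i, hdne, ?_⟩
  have hiv : ⟪d i, v⟫ = (‖v‖ / α) * ⟪d i, u⟫ := by
    rw [hu, real_inner_smul_right, ← mul_assoc]
    field_simp
  rw [hiv]
  calc (1 / (dmax * Λ)) * (‖d i‖ * ‖v‖)
      ≤ (1 / (dmax * Λ)) * (dmax * α * ‖v‖) := by
        apply mul_le_mul_of_nonneg_left _ (by positivity)
        exact mul_le_mul_of_nonneg_right (hnorm i) (le_of_lt hvnorm)
    _ = (‖v‖ / α) * (α ^ 2 / Λ) := by field_simp
    _ ≤ (‖v‖ / α) * ⟪d i, u⟫ := by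
        exact mul_le_mul_of_nonneg_left hi (by positivity)
end

section
/- Let x ∈ R^n and α > 0. If D = {d_1,...,d_p} ⊂ R^n is a positive spanning set with cosine measure cm(D) ≥ κ > 0 and ‖d_i‖ ≥ d_min·α for all i with d_min > 0, then D is a Λ-PSS for B(x,α) with Λ = 1/(d_min·κ). -/
open RealInnerProductSpace

/-!
Let `C` be the set of combinations `∑ cᵢ dᵢ` with `c ≥ 0` and `∑ cᵢ ≤ Λ`. It is the linear image
of a compact convex set of coefficients, so a vector `v ∉ C` is strictly separated from `C` by
some `y`. The cosine measure gives a `dᵢ` with `⟪dᵢ, y⟫ ≥ κ ‖dᵢ‖ ‖y‖ ≥ κ d_min α ‖y‖`, hence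
`⟪y, Λ • dᵢ⟫ ≥ α ‖y‖ ≥ ⟪y, v⟫` when `‖v‖ ≤ α`; since `Λ • dᵢ ∈ C`, this contradicts the separation.
-/

theorem exists_inner_lt_inner_of_notMem {E : Type*} [NormedAddCommGroup E]
    [InnerProductSpace ℝ E] [CompleteSpace E] {s : Set E} (hconv : Convex ℝ s)
    (hclosed : IsClosed s) {v : E} (hv : v ∉ s) : ∃ y : E, ∀ w ∈ s, ⟪y, w⟫ < ⟪y, v⟫ := by
  obtain ⟨f, u, hfs, hfv⟩ := geometric_hahn_banach_closed_point hconv hclosed hv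
  refine ⟨(InnerProductSpace.toDual ℝ E).symm f, fun w hw => ?_⟩
  simp only [InnerProductSpace.toDual_symm_apply]
  exact (hfs w hw).trans hfv

section SumLeSimplex

variable {ι : Type*} [Fintype ι]

def sumLeSimplex (ι : Type*) [Fintype ι] (Λ : ℝ) : Set (ι → ℝ) :=
  Set.Ici 0 ∩ {c | ∑ i, c i ≤ Λ}

theorem convex_sumLeSimplex (Λ : ℝ) : Convex ℝ (sumLeSimplex ι Λ) :=
  (convex_Ici 0).inter <| convex_halfSpace_le (f := fun c : ι → ℝ => ∑ i, c i)
    (IsLinearMap.mk (fun _ _ => Finset.sum_add_distrib) fun _ _ => (Finset.mul_sum _ _ _).symm) Λ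

theorem isCompact_sumLeSimplex (Λ : ℝ) : IsCompact (sumLeSimplex ι Λ) := by
  have hclosed : IsClosed (sumLeSimplex ι Λ) :=
    isClosed_Ici.inter (isClosed_le (by fun_prop) continuous_const)
  refine (isCompact_Icc (a := 0) (b := fun _ => Λ)).of_isClosed_subset hclosed ?_
  rintro c ⟨hc, hsum⟩
  refine ⟨hc, fun i => ?_⟩
  calc c i ≤ ∑ j, c j := Finset.single_le_sum (fun j _ => hc j) (Finset.mem_univ i)
    _ ≤ Λ := hsum

theorem single_mem_sumLeSimplex [DecidableEq ι] {Λ : ℝ} (hΛ : 0 ≤ Λ) (i : ι) :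
    Pi.single i Λ ∈ sumLeSimplex ι Λ :=
  ⟨Pi.single_nonneg.mpr hΛ, by simp⟩

end SumLeSimplex

theorem cosine_measure_implies_lambda_pss_general (n p : ℕ)
    (α κ dmin : ℝ)
    (hκ : 0 < κ) (hdmin : 0 < dmin)
    (d : Fin p → EuclideanSpace ℝ (Fin n))
    (hcm : ∀ v : EuclideanSpace ℝ (Fin n), v ≠ 0 →
      ∃ i, d i ≠ 0 ∧ κ * (‖d i‖ * ‖v‖) ≤ ⟪d i, v⟫)
    (hnorm : ∀ i, dmin * α ≤ ‖d i‖) :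
    ∀ v : EuclideanSpace ℝ (Fin n), ‖v‖ ≤ α →
      ∃ c : Fin p → ℝ, (∀ i, 0 ≤ c i) ∧ v = ∑ i, c i • d i ∧
        ∑ i, c i ≤ 1 / (dmin * κ) := by
  intro v hv
  set Λ := 1 / (dmin * κ)
  set L := Fintype.linearCombination ℝ d
  have hΛ : 0 ≤ Λ := by positivity
  by_contra hv_notMem
  have hvC : v ∉ L '' sumLeSimplex (Fin p) Λ := by
    rintro ⟨c, ⟨hc, hsum⟩, rfl⟩
    exact hv_notMem ⟨c, hc, Fintype.linearCombination_apply .., hsum⟩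
  obtain ⟨y, hsep⟩ := exists_inner_lt_inner_of_notMem
    ((convex_sumLeSimplex Λ).linear_image L)
    ((isCompact_sumLeSimplex Λ).image L.continuous_of_finiteDimensional).isClosed hvC
  have hy : y ≠ 0 := by
    rintro rfl
    simpa using hsep _ ⟨0, ⟨Set.mem_Ici.mpr le_rfl, by simpa using hΛ⟩, rfl⟩
  obtain ⟨i, -, hi⟩ := hcm y hy
  have hΛdi : ⟪y, Λ • d i⟫ < ⟪y, v⟫ :=
    hsep _ ⟨_, single_mem_sumLeSimplex hΛ i, by simp [L]⟩
  have hlower : α * ‖y‖ ≤ ⟪y, Λ • d i⟫ := by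
    rw [inner_smul_right, real_inner_comm]
    have hdi : κ * (dmin * α * ‖y‖) ≤ ⟪d i, y⟫ :=
      (mul_le_mul_of_nonneg_left (by gcongr; exact hnorm i) hκ.le).trans hi
    calc α * ‖y‖ = Λ * (κ * (dmin * α * ‖y‖)) := by simp only [Λ]; field_simp
      _ ≤ Λ * ⟪d i, y⟫ := by gcongr
  have hupper : ⟪y, v⟫ ≤ α * ‖y‖ := by
    calc ⟪y, v⟫ ≤ ‖y‖ * ‖v‖ := real_inner_le_norm y v
      _ ≤ α * ‖y‖ := by rw [mul_comm]; gcongr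
  linarith

/-- If D is a PSS with cosine measure at least κ > 0 and ‖dᵢ‖ ≥ d_min·α for all i,
then D is a Λ-PSS for B(x,α) with Λ = 1/(d_min·κ). -/
theorem cosine_measure_implies_lambda_pss (n p : ℕ)
    (x : EuclideanSpace ℝ (Fin n)) (α κ dmin : ℝ)
    (hα : 0 < α) (hκ : 0 < κ) (hdmin : 0 < dmin)
    (d : Fin p → EuclideanSpace ℝ (Fin n))
    (hpss : ∀ v : EuclideanSpace ℝ (Fin n), ∃ c : Fin p → ℝ,
      (∀ i, 0 ≤ c i) ∧ v = ∑ i, c i • d i)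
    (hcm : ∀ v : EuclideanSpace ℝ (Fin n), v ≠ 0 →
      ∃ i, d i ≠ 0 ∧ κ * (‖d i‖ * ‖v‖) ≤ ⟪d i, v⟫)
    (hnorm : ∀ i, dmin * α ≤ ‖d i‖) :
    ∀ v : EuclideanSpace ℝ (Fin n), ‖v‖ ≤ α →
      ∃ c : Fin p → ℝ, (∀ i, 0 ≤ c i) ∧ v = ∑ i, c i • d i ∧
        ∑ i, c i ≤ 1 / (dmin * κ) :=
  cosine_measure_implies_lambda_pss_general n p α κ dmin hκ hdmin d hcm hnorm
end

section
/- The cosine measure of the set of positive and negative coordinate vectors D = {±e_1, ..., ±e_n} in R^n equals 1/√n. -/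
/-!
For a unit vector `±eᵢ` the cosine with `v` is `±vᵢ / ‖v‖`. Choosing `i` with `|vᵢ|` maximal and
the sign of `vᵢ` gives `|vᵢ| / ‖v‖ ≥ 1 / √n`, because `‖v‖² ≤ n |vᵢ|²`. Conversely, the all-ones
vector has norm `√n` and every coordinate equal to `1`, so no `±eᵢ` does better than `1 / √n`.
-/

open RealInnerProductSpace

namespace EuclideanSpace

variable {ι : Type*} [Fintype ι]

lemma exists_norm_le_sqrt_card_mul_abs_apply [Nonempty ι] (v : EuclideanSpace ℝ ι) :
    ∃ i, ‖v‖ ≤ √(Fintype.card ι) * |v i| := by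
  classical
  obtain ⟨i, hi⟩ := exists_eq_ciSup_of_finite (f := fun j ↦ |v j|)
  refine ⟨i, hi ▸ ?_⟩
  simpa [inner_single_left] using (basisFun ι ℝ).norm_le_card_mul_iSup_norm_inner v

lemma norm_toLp_one : ‖WithLp.toLp 2 (fun _ : ι ↦ (1 : ℝ))‖ = √(Fintype.card ι) := by
  simp [EuclideanSpace.norm_eq]

variable [DecidableEq ι]

lemma inner_smul_single_one_div_norm_mul {ε : ℝ} (hε : |ε| = 1) (i : ι) (v : EuclideanSpace ℝ ι) :
    ⟪ε • single i (1 : ℝ), v⟫ / (‖ε • single i (1 : ℝ)‖ * ‖v‖) = ε * v i / ‖v‖ := by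
  simp [real_inner_smul_left, inner_single_left, norm_smul, hε]

end EuclideanSpace

open EuclideanSpace

/-- The cosine measure of D = {±e₁,…,±eₙ} equals 1/√n:
(i) for every nonzero v some signed coordinate vector has cosine at least 1/√n with v;
(ii) some nonzero v achieves cosine at most 1/√n with every signed coordinate vector. -/
theorem cosine_measure_coordinate_vectors (n : ℕ) (hn : 0 < n) :
    (∀ v : EuclideanSpace ℝ (Fin n), v ≠ 0 →
      ∃ (i : Fin n) (ε : ℝ), (ε = 1 ∨ ε = -1) ∧
        (1 / Real.sqrt n) ≤
          ⟪ε • (EuclideanSpace.single i (1:ℝ)), v⟫ /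
            (‖ε • (EuclideanSpace.single i (1:ℝ))‖ * ‖v‖)) ∧
    (∃ v : EuclideanSpace ℝ (Fin n), v ≠ 0 ∧
      ∀ (i : Fin n) (ε : ℝ), (ε = 1 ∨ ε = -1) →
        ⟪ε • (EuclideanSpace.single i (1:ℝ)), v⟫ /
            (‖ε • (EuclideanSpace.single i (1:ℝ))‖ * ‖v‖) ≤ 1 / Real.sqrt n) := by
  have : Nonempty (Fin n) := ⟨⟨0, hn⟩⟩
  have hsqrt : 0 < √(n : ℝ) := Real.sqrt_pos.2 (Nat.cast_pos.2 hn)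
  have abs_sign : ∀ ε : ℝ, (ε = 1 ∨ ε = -1) → |ε| = 1 := by rintro _ (rfl | rfl) <;> simp
  constructor
  · intro v hv
    obtain ⟨i, hi⟩ := exists_norm_le_sqrt_card_mul_abs_apply v
    obtain ⟨ε, hε, hεv⟩ : ∃ ε : ℝ, (ε = 1 ∨ ε = -1) ∧ ε * v i = |v i| := by
      rcases abs_choice (v i) with h | h
      · exact ⟨1, .inl rfl, by rw [h, one_mul]⟩
      · exact ⟨-1, .inr rfl, by rw [h, neg_one_mul]⟩
    refine ⟨i, ε, hε, ?_⟩
    rw [inner_smul_single_one_div_norm_mul (abs_sign ε hε), hεv,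
      div_le_div_iff₀ hsqrt (norm_pos_iff.2 hv), one_mul]
    simpa [mul_comm] using hi
  · refine ⟨WithLp.toLp 2 (fun _ ↦ 1), fun h ↦ by simpa using congrArg (· ⟨0, hn⟩) h, ?_⟩
    intro i ε hε
    rw [inner_smul_single_one_div_norm_mul (abs_sign ε hε), norm_toLp_one, Fintype.card_fin]
    gcongr
    simpa using le_abs_self ε |>.trans (abs_sign ε hε).le
end

section
/- Let f : R^n → R be C^1 with L-Lipschitz gradient, and let the polling set D_k at iterate x_k be a Λ-PSS for B(x_k, α_k) with ‖d‖ ≤ d_max·α_k for all d ∈ D_k. If ∇f(x_k) ≠ 0 and α_k < 2‖∇f(x_k)‖ / ((L·d_max² + σ)·Λ), then there exists d ∈ D_k with f(x_k + d) < f(x_k) − (σ/2)·α_k². -/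
/-!
Take the poll direction `v = -(α / ‖∇f x‖) • ∇f x` of norm `α`. Writing it as a nonnegative
combination `∑ cᵢ dᵢ` with `∑ cᵢ ≤ Λ`, the most descending direction `dᵢ` satisfies
`Λ ⟪∇f x, dᵢ⟫ ≤ ⟪∇f x, v⟫ = -α ‖∇f x‖`. The descent lemma then bounds
`f (x + dᵢ) - f x` by `-α ‖∇f x‖ / Λ + L dmax² α² / 2`, which the bound on `α` makes
smaller than `-σ α² / 2`.
-/

open RealInnerProductSpace

lemma Finset.exists_mul_le_sum_mul_of_sum_mul_neg {ι : Type*} [Fintype ι] {c y : ι → ℝ}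
    {Λ : ℝ} (hc : ∀ i, 0 ≤ c i) (hcΛ : ∑ i, c i ≤ Λ) (hneg : ∑ i, c i * y i < 0) :
    ∃ i, Λ * y i ≤ ∑ i, c i * y i := by
  have : Nonempty ι := by
    by_contra h
    simp [not_nonempty_iff.mp h] at hneg
  obtain ⟨j, hj⟩ := Finite.exists_min y
  have hmin : (∑ i, c i) * y j ≤ ∑ i, c i * y i := by
    rw [Finset.sum_mul]
    exact Finset.sum_le_sum fun i _ => mul_le_mul_of_nonneg_left (hj i) (hc i)
  have hyj : y j < 0 := by
    by_contra! h
    exact (mul_nonneg (Finset.sum_nonneg fun i _ => hc i) h).not_gt (hmin.trans_lt hneg)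
  exact ⟨j, (mul_le_mul_of_nonpos_right hcΛ hyj.le).trans hmin⟩

section Descent

variable {E : Type*} [NormedAddCommGroup E] [InnerProductSpace ℝ E] [CompleteSpace E]
  {f : E → ℝ}

lemma HasGradientAt.hasDerivAt_comp_add_smul {x v : E} {t : ℝ} {g : E}
    (hf : HasGradientAt f g (x + t • v)) :
    HasDerivAt (fun s : ℝ => f (x + s • v)) ⟪g, v⟫ t := by
  have hline : HasDerivAt (fun s : ℝ => x + s • v) v t := by
    simpa using ((hasDerivAt_id t).smul_const v).const_add x
  have h := hf.hasFDerivAt.comp_hasDerivAt t hline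
  rwa [InnerProductSpace.toDual_apply_apply] at h

theorem le_add_inner_gradient_add_sq_of_lipschitz_gradient {L : ℝ}
    (hf : Differentiable ℝ f)
    (hlip : ∀ y z : E, ‖gradient f y - gradient f z‖ ≤ L * ‖y - z‖) (x v : E) :
    f (x + v) ≤ f x + ⟪gradient f x, v⟫ + L / 2 * ‖v‖ ^ 2 := by
  set g := gradient f x
  let ψ : ℝ → ℝ := fun t => f (x + t • v) - t * ⟪g, v⟫ - L / 2 * ‖v‖ ^ 2 * t ^ 2
  have hψ : ∀ t, HasDerivAt ψ (⟪gradient f (x + t • v) - g, v⟫ - L * ‖v‖ ^ 2 * t) t := by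
    intro t
    have := (((hf (x + t • v)).hasGradientAt.hasDerivAt_comp_add_smul).sub
      ((hasDerivAt_id t).mul_const ⟪g, v⟫)).sub
      ((hasDerivAt_pow 2 t).const_mul (L / 2 * ‖v‖ ^ 2))
    refine this.congr_deriv ?_
    rw [inner_sub_left]
    ring
  have hψ_nonpos : ∀ t ∈ interior (Set.Icc (0 : ℝ) 1),
      ⟪gradient f (x + t • v) - g, v⟫ - L * ‖v‖ ^ 2 * t ≤ 0 := by
    intro t ht
    rw [interior_Icc] at ht
    have hstep : ‖x + t • v - x‖ = t * ‖v‖ := by simp [norm_smul, abs_of_pos ht.1]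
    rw [sub_nonpos]
    calc ⟪gradient f (x + t • v) - g, v⟫
        ≤ ‖gradient f (x + t • v) - g‖ * ‖v‖ := real_inner_le_norm _ _
      _ ≤ L * ‖x + t • v - x‖ * ‖v‖ := by gcongr; exact hlip _ _
      _ = L * ‖v‖ ^ 2 * t := by rw [hstep]; ring
  have hanti : AntitoneOn ψ (Set.Icc 0 1) :=
    antitoneOn_of_hasDerivWithinAt_nonpos (convex_Icc 0 1)
      (fun t _ => (hψ t).continuousAt.continuousWithinAt)
      (fun t _ => (hψ t).hasDerivWithinAt) hψ_nonpos
  have h10 := hanti (Set.left_mem_Icc.2 zero_le_one) (Set.right_mem_Icc.2 zero_le_one) zero_le_one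
  norm_num [ψ] at h10
  linarith

end Descent

theorem lambda_pss_success_unconstrained_general (n p : ℕ)
    (f : EuclideanSpace ℝ (Fin n) → ℝ) (L σ Λ dmax α : ℝ)
    (hL : 0 < L) (hσ : 0 < σ) (hΛ : 0 < Λ) (hα : 0 < α)
    (hf : ContDiff ℝ 1 f)
    (hlip : ∀ y z : EuclideanSpace ℝ (Fin n),
      ‖gradient f y - gradient f z‖ ≤ L * ‖y - z‖)
    (x : EuclideanSpace ℝ (Fin n)) (d : Fin p → EuclideanSpace ℝ (Fin n))
    (hPSS : ∀ v : EuclideanSpace ℝ (Fin n), ‖v‖ ≤ α →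
      ∃ c : Fin p → ℝ, (∀ i, 0 ≤ c i) ∧ v = ∑ i, c i • d i ∧ ∑ i, c i ≤ Λ)
    (hnorm : ∀ i, ‖d i‖ ≤ dmax * α)
    (hgrad : gradient f x ≠ 0)
    (hsmall : α < 2 * ‖gradient f x‖ / ((L * dmax ^ 2 + σ) * Λ)) :
    ∃ i, f (x + d i) < f x - σ / 2 * α ^ 2 := by
  set g := gradient f x
  have hg : 0 < ‖g‖ := norm_pos_iff.2 hgrad
  set v := -(α / ‖g‖) • g
  have hv : ‖v‖ = α := by
    rw [norm_smul, norm_neg, Real.norm_eq_abs, abs_of_pos (by positivity)]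
    field_simp
  have hgv : ⟪g, v⟫ = -(α * ‖g‖) := by
    rw [real_inner_smul_right, real_inner_self_eq_norm_sq]
    field_simp
  obtain ⟨c, hc, hvc, hcΛ⟩ := hPSS v hv.le
  have hsum : ∑ i, c i * ⟪g, d i⟫ = -(α * ‖g‖) := by
    simp only [← hgv, hvc, inner_sum, real_inner_smul_right]
  obtain ⟨i, hi⟩ := Finset.exists_mul_le_sum_mul_of_sum_mul_neg hc hcΛ
    (hsum ▸ neg_neg_of_pos (by positivity))
  refine ⟨i, ?_⟩
  have hdesc := le_add_inner_gradient_add_sq_of_lipschitz_gradient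
    (hf.differentiable one_ne_zero) hlip x (d i)
  have hdi : ‖d i‖ ^ 2 ≤ (dmax * α) ^ 2 := pow_le_pow_left₀ (norm_nonneg _) (hnorm i) 2
  have hsmall' : α * ((L * dmax ^ 2 + σ) * Λ) < 2 * ‖g‖ := (lt_div_iff₀ (by positivity)).mp hsmall
  have hdecrease : Λ * (⟪g, d i⟫ + L / 2 * ‖d i‖ ^ 2) < Λ * -(σ / 2 * α ^ 2) := by
    nlinarith [mul_le_mul_of_nonneg_left hdi (by positivity : 0 ≤ Λ * L / 2)]
  linarith [lt_of_mul_lt_mul_left hdecrease hΛ.le]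

/-- Success of a polling step on a Λ-PSS in the unconstrained case: if f is C¹ with
L-Lipschitz gradient, D is a Λ-PSS for B(x,α) with ‖d‖ ≤ d_max·α, ∇f(x) ≠ 0 and
α < 2‖∇f(x)‖/((L d_max² + σ)Λ), then some poll point achieves sufficient decrease. -/
theorem lambda_pss_success_unconstrained (n p : ℕ)
    (f : EuclideanSpace ℝ (Fin n) → ℝ) (L σ Λ dmax α : ℝ)
    (hL : 0 < L) (hσ : 0 < σ) (hΛ : 0 < Λ) (hdmax : 0 < dmax) (hα : 0 < α)
    (hf : ContDiff ℝ 1 f)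
    (hlip : ∀ y z : EuclideanSpace ℝ (Fin n),
      ‖gradient f y - gradient f z‖ ≤ L * ‖y - z‖)
    (x : EuclideanSpace ℝ (Fin n)) (d : Fin p → EuclideanSpace ℝ (Fin n))
    (hPSS : ∀ v : EuclideanSpace ℝ (Fin n), ‖v‖ ≤ α →
      ∃ c : Fin p → ℝ, (∀ i, 0 ≤ c i) ∧ v = ∑ i, c i • d i ∧ ∑ i, c i ≤ Λ)
    (hnorm : ∀ i, ‖d i‖ ≤ dmax * α)
    (hgrad : gradient f x ≠ 0)
    (hsmall : α < 2 * ‖gradient f x‖ / ((L * dmax ^ 2 + σ) * Λ)) :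
    ∃ i, f (x + d i) < f x - σ / 2 * α ^ 2 :=
  lambda_pss_success_unconstrained_general n p f L σ Λ dmax α hL hσ hΛ hα hf hlip x d hPSS hnorm
    hgrad hsmall
end

section
/- Let Ω = {x ∈ R^n : x^L ≤ x ≤ x^U} with x^L_i < x^U_i for all i, let x ∈ Ω and α > 0. Define α_{−i} := min(α, x_i − x^L_i) and α_i := min(α, x^U_i − x_i), and D := ∪_{i=1}^n {−α_{−i} e_i, α_i e_i}. Then D is a Λ-PSS for B(x,α) ∩ Ω with Λ = min(n, √n·α / min{α, min over i with x_i ≠ x^L_i of (x_i − x^L_i), min over i with x_i ≠ x^U_i of (x^U_i − x_i)}). -/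
/-!
Split `v` coordinatewise into positive and negative parts,
`v = ∑ (vᵢ⁺ / αᵢ) (αᵢ eᵢ) + ∑ (vᵢ⁻ / α₋ᵢ) (-α₋ᵢ eᵢ)`. Feasibility of `x + v` together with
`|vᵢ| ≤ ‖v‖ ≤ α` gives `vᵢ⁺ ≤ αᵢ` and `vᵢ⁻ ≤ α₋ᵢ`, and at most one of `vᵢ⁺, vᵢ⁻` is nonzero, so
each coordinate contributes at most `1` to the coefficient sum. If `vᵢ > 0` then `xᵢ < xᵢᵁ`, so the
gap `xᵢᵁ - xᵢ` enters the minimum `δ` and `αᵢ ≥ δ` (symmetrically for `vᵢ < 0`); hence the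
coefficient sum is also at most `∑ |vᵢ| / δ ≤ √n ‖v‖ / δ ≤ √n α / δ` by Cauchy–Schwarz.
-/

open Finset Set

section Scalar

variable {t a b l y u α δ : ℝ}

lemma add_min_sub_mem_Icc (hy : y ∈ Icc l u) (hα : 0 ≤ α) : y + min α (u - y) ∈ Icc l u :=
  ⟨by linarith [hy.1, le_min hα (sub_nonneg.2 hy.2)], by linarith [min_le_right α (u - y)]⟩

lemma add_neg_min_sub_mem_Icc (hy : y ∈ Icc l u) (hα : 0 ≤ α) : y + -min α (y - l) ∈ Icc l u :=
  ⟨by linarith [min_le_right α (y - l)], by linarith [hy.2, le_min hα (sub_nonneg.2 hy.1)]⟩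

lemma posPart_le_min_sub (hy : y ≤ u) (hyt : y + t ≤ u) (ht : |t| ≤ α) :
    t⁺ ≤ min α (u - y) :=
  max_le (le_min ((le_abs_self t).trans ht) (by linarith))
    (le_min ((abs_nonneg t).trans ht) (sub_nonneg.2 hy))

lemma negPart_le_min_sub (hy : l ≤ y) (hyt : l ≤ y + t) (ht : |t| ≤ α) :
    t⁻ ≤ min α (y - l) :=
  max_le (le_min ((neg_le_abs t).trans ht) (by linarith))
    (le_min ((abs_nonneg t).trans ht) (sub_nonneg.2 hy))

lemma posPart_div_add_negPart_div_le_one (ha : t⁺ ≤ a) (hb : t⁻ ≤ b) : t⁺ / a + t⁻ / b ≤ 1 := by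
  rcases le_total 0 t with h | h
  · rw [negPart_eq_zero.2 h, zero_div, add_zero]
    exact div_le_one_of_le₀ ha ((posPart_nonneg t).trans ha)
  · rw [posPart_eq_zero.2 h, zero_div, zero_add]
    exact div_le_one_of_le₀ hb ((negPart_nonneg t).trans hb)

lemma posPart_div_add_negPart_div_le_abs_div (hδ : 0 < δ) (ha : 0 < t → δ ≤ a)
    (hb : t < 0 → δ ≤ b) : t⁺ / a + t⁻ / b ≤ |t| / δ := by
  rcases lt_trichotomy t 0 with h | rfl | h
  · rw [posPart_eq_zero.2 h.le, negPart_eq_neg.2 h.le, abs_of_neg h, zero_div, zero_add]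
    exact div_le_div_of_nonneg_left (neg_nonneg.2 h.le) hδ (hb h)
  · simp
  · rw [negPart_eq_zero.2 h.le, posPart_eq_self.2 h.le, abs_of_pos h, zero_div, add_zero]
    exact div_le_div_of_nonneg_left h.le hδ (ha h)

end Scalar

lemma EuclideanSpace.sum_abs_le_sqrt_card_mul_norm {ι : Type*} [Fintype ι]
    (v : EuclideanSpace ℝ ι) : ∑ i, |v i| ≤ √(Fintype.card ι) * ‖v‖ := by
  rw [EuclideanSpace.norm_eq, ← Real.sqrt_mul (Nat.cast_nonneg _)]
  apply Real.le_sqrt_of_sq_le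
  simpa only [Real.norm_eq_abs, sq_abs, card_univ] using
    sq_sum_le_card_mul_sum_sq (s := univ) (f := fun i => |v i|)

lemma EuclideanSpace.eq_sum_posPart_smul_add_sum_negPart_smul {ι : Type*} [Fintype ι]
    [DecidableEq ι] (v : EuclideanSpace ℝ ι)
    {a b : ι → ℝ} (ha : ∀ i, (v i)⁺ ≤ a i) (hb : ∀ i, (v i)⁻ ≤ b i) :
    v = ∑ i, ((v i)⁺ / a i) • (a i • EuclideanSpace.single i (1 : ℝ))
      + ∑ i, ((v i)⁻ / b i) • -(b i • EuclideanSpace.single i (1 : ℝ)) := by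
  ext j
  simp only [smul_neg, sum_neg_distrib, PiLp.add_apply, WithLp.ofLp_sum, WithLp.ofLp_smul,
    PiLp.ofLp_single, Finset.sum_apply, Pi.smul_apply, smul_eq_mul, PiLp.neg_apply,
    Pi.single_apply, mul_ite, mul_one, mul_zero, sum_ite_eq, Finset.mem_univ, if_true]
  -- `a j = 0` forces `(v j)⁺ = 0`, so the junk value `(v j)⁺ / 0 = 0` does no harm.
  rw [← sub_eq_add_neg, div_mul_cancel_of_imp fun h => le_antisymm (h ▸ ha j) (posPart_nonneg _),
    div_mul_cancel_of_imp fun h => le_antisymm (h ▸ hb j) (negPart_nonneg _), posPart_sub_negPart]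

lemma add_smul_single_mem_box {ι : Type*} [DecidableEq ι] {xL xU : ι → ℝ}
    {x : EuclideanSpace ℝ ι} (hx : ∀ j, x j ∈ Icc (xL j) (xU j)) {i : ι} {t : ℝ}
    (ht : x i + t ∈ Icc (xL i) (xU i)) :
    x + t • EuclideanSpace.single i 1 ∈
      {y : EuclideanSpace ℝ ι | ∀ j, y j ∈ Icc (xL j) (xU j)} := by
  intro j
  rcases eq_or_ne j i with rfl | hji
  · simpa using ht
  · simpa [hji] using hx j

lemma sInf_gaps_pos_and_le {ι : Type*} [Finite ι] {x xL xU : ι → ℝ} {α δ : ℝ}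
    (hx : ∀ i, x i ∈ Icc (xL i) (xU i)) (hα : 0 < α)
    (hδ : δ = sInf ({α} ∪ {t : ℝ | ∃ i, x i ≠ xL i ∧ t = x i - xL i}
      ∪ {t : ℝ | ∃ i, x i ≠ xU i ∧ t = xU i - x i})) :
    0 < δ ∧ δ ≤ α ∧ (∀ i, xL i < x i → δ ≤ x i - xL i) ∧ (∀ i, x i < xU i → δ ≤ xU i - x i) := by
  set S := ({α} ∪ {t : ℝ | ∃ i, x i ≠ xL i ∧ t = x i - xL i}
      ∪ {t : ℝ | ∃ i, x i ≠ xU i ∧ t = xU i - x i})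
  have hrange (p : ι → Prop) (f : ι → ℝ) : {t | ∃ i, p i ∧ t = f i}.Finite :=
    (Set.finite_range f).subset (by rintro _ ⟨i, -, rfl⟩; exact ⟨i, rfl⟩)
  have hfin : S.Finite := ((Set.finite_singleton α).union (hrange _ _)).union (hrange _ _)
  have hpos : ∀ t ∈ S, 0 < t := by
    rintro t ((rfl | ⟨i, hi, rfl⟩) | ⟨i, hi, rfl⟩)
    · exact hα
    · exact sub_pos.2 ((hx i).1.lt_of_ne hi.symm)
    · exact sub_pos.2 ((hx i).2.lt_of_ne hi)
  have hαS : α ∈ S := .inl (.inl rfl)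
  have hle : ∀ t ∈ S, δ ≤ t := fun t ht => hδ ▸ csInf_le hfin.bddBelow ht
  refine ⟨hδ ▸ (hfin.lt_csInf_iff ⟨α, hαS⟩).2 hpos, hle α hαS, fun i hi => hle _ ?_,
    fun i hi => hle _ ?_⟩
  · exact .inl (.inr ⟨i, hi.ne', rfl⟩)
  · exact .inr ⟨i, hi.ne, rfl⟩

theorem bound_constraints_lambda_pss_general (n : ℕ)
    (xL xU : Fin n → ℝ)
    (Ω : Set (EuclideanSpace ℝ (Fin n)))
    (hΩ : Ω = {y : EuclideanSpace ℝ (Fin n) | ∀ i, xL i ≤ y i ∧ y i ≤ xU i})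
    (x : EuclideanSpace ℝ (Fin n)) (hx : x ∈ Ω) (α : ℝ) (hα : 0 < α)
    (αneg αpos : Fin n → ℝ)
    (hαneg : ∀ i, αneg i = min α (x i - xL i))
    (hαpos : ∀ i, αpos i = min α (xU i - x i))
    (δ : ℝ)
    (hδ : δ = sInf ({α} ∪ {t : ℝ | ∃ i, x i ≠ xL i ∧ t = x i - xL i}
      ∪ {t : ℝ | ∃ i, x i ≠ xU i ∧ t = xU i - x i}))
    (Λ : ℝ) (hΛ : Λ = min (n : ℝ) (Real.sqrt n * α / δ)) :
    (∀ i, x + αpos i • (EuclideanSpace.single i (1:ℝ)) ∈ Ω ∧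
      x + (-(αneg i • (EuclideanSpace.single i (1:ℝ)))) ∈ Ω) ∧
    (∀ v : EuclideanSpace ℝ (Fin n), x + v ∈ Ω → ‖v‖ ≤ α →
      ∃ cpos cneg : Fin n → ℝ, (∀ i, 0 ≤ cpos i) ∧ (∀ i, 0 ≤ cneg i) ∧
        v = (∑ i, cpos i • (αpos i • (EuclideanSpace.single i (1:ℝ))))
            + ∑ i, cneg i • (-(αneg i • (EuclideanSpace.single i (1:ℝ)))) ∧
        ∑ i, (cpos i + cneg i) ≤ Λ) := by
  subst hΩ hΛ
  obtain rfl : αpos = fun i => min α (xU i - x i) := funext hαpos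
  obtain rfl : αneg = fun i => min α (x i - xL i) := funext hαneg
  obtain ⟨hδpos, hδα, hδL, hδU⟩ := sInf_gaps_pos_and_le hx hα hδ
  refine ⟨fun i => ⟨add_smul_single_mem_box hx (add_min_sub_mem_Icc (hx i) hα.le), ?_⟩,
    fun v hv hvα => ?_⟩
  · rw [← neg_smul]
    exact add_smul_single_mem_box hx (add_neg_min_sub_mem_Icc (hx i) hα.le)
  have hv' i : x i + v i ∈ Icc (xL i) (xU i) := hv i
  have hvi i : |v i| ≤ α := (PiLp.norm_apply_le v i).trans hvα
  have hpos i : (v i)⁺ ≤ min α (xU i - x i) := posPart_le_min_sub (hx i).2 (hv' i).2 (hvi i)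
  have hneg i : (v i)⁻ ≤ min α (x i - xL i) := negPart_le_min_sub (hx i).1 (hv' i).1 (hvi i)
  refine ⟨fun i => (v i)⁺ / min α (xU i - x i), fun i => (v i)⁻ / min α (x i - xL i),
    fun i => div_nonneg (posPart_nonneg _) ((posPart_nonneg _).trans (hpos i)),
    fun i => div_nonneg (negPart_nonneg _) ((negPart_nonneg _).trans (hneg i)),
    v.eq_sum_posPart_smul_add_sum_negPart_smul hpos hneg, le_min ?_ ?_⟩
  · calc _ ≤ ∑ _i : Fin n, (1 : ℝ) :=
          sum_le_sum fun i _ => posPart_div_add_negPart_div_le_one (hpos i) (hneg i)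
      _ = n := by simp
  · calc _ ≤ ∑ i, |v i| / δ := sum_le_sum fun i _ => posPart_div_add_negPart_div_le_abs_div hδpos
          (fun h => le_min hδα (hδU i (by linarith [(hv' i).2])))
          (fun h => le_min hδα (hδL i (by linarith [(hv' i).1])))
      _ = (∑ i, |v i|) / δ := (sum_div ..).symm
      _ ≤ √n * α / δ := by
          gcongr
          calc ∑ i, |v i| ≤ √(Fintype.card (Fin n)) * ‖v‖ := v.sum_abs_le_sqrt_card_mul_norm
            _ ≤ √n * α := by rw [Fintype.card_fin]; gcongr

/-- Bound constraints: the set D = ∪ᵢ {−α₋ᵢ eᵢ, αᵢ eᵢ} with α₋ᵢ = min(α, xᵢ−xᵢᴸ),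
αᵢ = min(α, xᵢᵁ−xᵢ) is a Λ-PSS for B(x,α) ∩ Ω with
Λ = min(n, √n·α / min{α, minᵢ:xᵢ≠xᵢᴸ (xᵢ−xᵢᴸ), minᵢ:xᵢ≠xᵢᵁ (xᵢᵁ−xᵢ)}). -/
theorem bound_constraints_lambda_pss (n : ℕ)
    (xL xU : Fin n → ℝ) (hLU : ∀ i, xL i < xU i)
    (Ω : Set (EuclideanSpace ℝ (Fin n)))
    (hΩ : Ω = {y : EuclideanSpace ℝ (Fin n) | ∀ i, xL i ≤ y i ∧ y i ≤ xU i})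
    (x : EuclideanSpace ℝ (Fin n)) (hx : x ∈ Ω) (α : ℝ) (hα : 0 < α)
    (αneg αpos : Fin n → ℝ)
    (hαneg : ∀ i, αneg i = min α (x i - xL i))
    (hαpos : ∀ i, αpos i = min α (xU i - x i))
    (δ : ℝ)
    (hδ : δ = sInf ({α} ∪ {t : ℝ | ∃ i, x i ≠ xL i ∧ t = x i - xL i}
      ∪ {t : ℝ | ∃ i, x i ≠ xU i ∧ t = xU i - x i}))
    (Λ : ℝ) (hΛ : Λ = min (n : ℝ) (Real.sqrt n * α / δ)) :
    (∀ i, x + αpos i • (EuclideanSpace.single i (1:ℝ)) ∈ Ω ∧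
      x + (-(αneg i • (EuclideanSpace.single i (1:ℝ)))) ∈ Ω) ∧
    (∀ v : EuclideanSpace ℝ (Fin n), x + v ∈ Ω → ‖v‖ ≤ α →
      ∃ cpos cneg : Fin n → ℝ, (∀ i, 0 ≤ cpos i) ∧ (∀ i, 0 ≤ cneg i) ∧
        v = (∑ i, cpos i • (αpos i • (EuclideanSpace.single i (1:ℝ))))
            + ∑ i, cneg i • (-(αneg i • (EuclideanSpace.single i (1:ℝ)))) ∧
        ∑ i, (cpos i + cneg i) ≤ Λ) :=
  bound_constraints_lambda_pss_general n xL xU Ω hΩ x hx α hα αneg αpos hαneg hαpos δ hδ Λ hΛ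
end

section
/- Let A = [a_1 ⋯ a_q] ∈ R^{n×q} with rank q ≤ n, and let u_1,...,u_n be an orthonormal basis of R^n with span{u_1,...,u_q} = col(A). Then the cone T := {y ∈ R^n : a_j^T y ≤ 0 for all j = 1,...,q} is generated by the 2n − q vectors {−(A†)^T e_i : i = 1,...,q} ∪ {±u_{q+1}, ..., ±u_n}: every y ∈ T is a nonnegative combination of these vectors, and each of these vectors lies in T. -/
open Matrix

lemma dot_zero_of_mem_span {n : ℕ} {s : Set (Fin n → ℝ)} {v : Fin n → ℝ}
    (h : ∀ w ∈ s, w ⬝ᵥ v = 0) {x : Fin n → ℝ} (hx : x ∈ Submodule.span ℝ s) :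
    x ⬝ᵥ v = 0 := by
  induction hx using Submodule.span_induction with
  | mem w hw => exact h w hw
  | zero => simp
  | add _ _ _ _ h1 h2 => simp [add_dotProduct, h1, h2]
  | smul c _ _ h1 => simp [smul_dotProduct, h1]

/-- Generators of the polyhedral cone T = {y : aⱼᵀy ≤ 0 ∀j} for linearly independent
normals: every y ∈ T is a nonnegative combination of {−(A†)ᵀeᵢ} ∪ {±u_{q+1},…,±uₙ},
and each of these 2n − q vectors lies in T. -/
theorem tangent_cone_generators (n q : ℕ) (hq : q ≤ n)
    (A : Matrix (Fin n) (Fin q) ℝ) (hrank : A.rank = q)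
    (Adag : Matrix (Fin q) (Fin n) ℝ) (hAdag : Adag = (Aᵀ * A)⁻¹ * Aᵀ)
    (a : Fin q → (Fin n → ℝ)) (ha : ∀ j, a j = fun k => A k j)
    (u : Fin n → (Fin n → ℝ))
    (hortho : ∀ i j, u i ⬝ᵥ u j = if i = j then 1 else 0)
    (hspan : Submodule.span ℝ {w : Fin n → ℝ | ∃ i : Fin n, (i : ℕ) < q ∧ w = u i}
      = Submodule.span ℝ (Set.range a))
    (dhat : Fin q → (Fin n → ℝ))
    (hdhat : ∀ i, dhat i = -(Adagᵀ *ᵥ Pi.single i 1)) :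
    (∀ y : Fin n → ℝ, (∀ j, a j ⬝ᵥ y ≤ 0) →
      ∃ (c : Fin q → ℝ) (bpos bneg : Fin n → ℝ),
        (∀ i, 0 ≤ c i) ∧ (∀ i, 0 ≤ bpos i) ∧ (∀ i, 0 ≤ bneg i) ∧
        (∀ i : Fin n, (i : ℕ) < q → bpos i = 0 ∧ bneg i = 0) ∧
        y = (∑ i, c i • dhat i) + (∑ i, bpos i • u i) + ∑ i, bneg i • (-(u i))) ∧
    (∀ i j, a j ⬝ᵥ dhat i ≤ 0) ∧
    (∀ i : Fin n, q ≤ (i : ℕ) → ∀ j, a j ⬝ᵥ u i ≤ 0 ∧ a j ⬝ᵥ (-(u i)) ≤ 0) := by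
  -- AᵀA is invertible
  have hATA : IsUnit (Aᵀ * A) := by
    rw [← Matrix.mulVec_surjective_iff_isUnit]
    have hr : (Aᵀ * A).rank = q := by rw [Matrix.rank_transpose_mul_self, hrank]
    have htop : LinearMap.range (Aᵀ * A).mulVecLin = ⊤ := by
      apply Submodule.eq_top_of_finrank_eq
      simpa [Matrix.rank] using hr
    intro y
    exact LinearMap.range_eq_top.mp htop y
  have hdet : IsUnit (Aᵀ * A).det := (Matrix.isUnit_iff_isUnit_det _).mp hATA
  have hinv : (Aᵀ * A)⁻¹ * (Aᵀ * A) = 1 := Matrix.nonsing_inv_mul _ hdet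
  have hinv' : (Aᵀ * A) * (Aᵀ * A)⁻¹ = 1 := Matrix.mul_nonsing_inv _ hdet
  have hAdagA : Adag * A = 1 := by rw [hAdag, Matrix.mul_assoc] ; exact hinv
  -- dot with a j equals (Aᵀ *ᵥ ·) j
  have hdotA : ∀ (j : Fin q) (x : Fin n → ℝ), a j ⬝ᵥ x = (Aᵀ *ᵥ x) j := by
    intro j x
    simp [ha, Matrix.mulVec, dotProduct, Matrix.transpose_apply]
  -- symmetry of the projection
  have hAdagT : Adagᵀ = A * (Aᵀ * A)⁻¹ := by
    rw [hAdag, Matrix.transpose_mul, Matrix.transpose_nonsing_inv,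
      Matrix.transpose_mul, Matrix.transpose_transpose]
  -- Part 2
  have part2 : ∀ i j, a j ⬝ᵥ dhat i ≤ 0 := by
    intro i j
    have h1 : Aᵀ *ᵥ (Adagᵀ *ᵥ Pi.single i 1) = Pi.single i 1 := by
      rw [Matrix.mulVec_mulVec]
      have : Aᵀ * Adagᵀ = 1 := by
        rw [← Matrix.transpose_mul, hAdagA, Matrix.transpose_one]
      rw [this, Matrix.one_mulVec]
    have : a j ⬝ᵥ dhat i = -(Pi.single i 1 : Fin q → ℝ) j := by
      rw [hdhat, ]
      have := hdotA j (-(Adagᵀ *ᵥ Pi.single i 1))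
      rw [this, Matrix.mulVec_neg, h1]
      simp
    rw [this]
    by_cases hij : i = j <;> simp [hij, Pi.single_apply]
  -- Part 3
  have part3 : ∀ i : Fin n, q ≤ (i : ℕ) → ∀ j, a j ⬝ᵥ u i = 0 := by
    intro i hi j
    have haj : a j ∈ Submodule.span ℝ {w : Fin n → ℝ | ∃ k : Fin n, (k : ℕ) < q ∧ w = u k} := by
      rw [hspan]
      exact Submodule.subset_span ⟨j, rfl⟩
    have := dot_zero_of_mem_span (v := u i) (fun w hw => by
      obtain ⟨k, hk, rfl⟩ := hw
      have : k ≠ i := by rintro rfl; omega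
      simpa [this] using hortho k i) haj
    exact this
  refine ⟨?_, part2, fun i hi j => by
    have := part3 i hi j
    constructor <;> simp [this, dotProduct_neg]⟩
  -- Part 1
  intro y hy
  set c : Fin q → ℝ := fun i => -(a i ⬝ᵥ y) with hc
  set p : Fin n → ℝ := A *ᵥ (Adag *ᵥ y) with hp
  set r : Fin n → ℝ := y - p with hr
  -- sum of c i • dhat i = p
  have hsum1 : ∑ i, c i • dhat i = p := by
    have h1 : ∑ i, c i • dhat i = Adagᵀ *ᵥ (Aᵀ *ᵥ y) := by
      funext k
      simp only [Finset.sum_apply, Pi.smul_apply, hdhat, hc]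
      simp only [Matrix.mulVec, dotProduct, Matrix.transpose_apply,
        Pi.neg_apply, smul_eq_mul]
      refine Finset.sum_congr rfl fun x _ => ?_
      rw [neg_mul_neg]
      have h2 : ∑ x1, Adag x1 k * (Pi.single x 1 : Fin q → ℝ) x1 = Adag x k := by
        simp [Pi.single_apply]
      rw [h2, mul_comm]
      congr 1
      exact Finset.sum_congr rfl fun i _ => by rw [ha]
    rw [h1, Matrix.mulVec_mulVec, hAdagT, hp, hAdag, Matrix.mulVec_mulVec,
      Matrix.mul_assoc]
  have hAr : ∀ j, a j ⬝ᵥ r = 0 := by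
    intro j
    rw [hdotA]
    have : Aᵀ *ᵥ r = 0 := by
      rw [hr, Matrix.mulVec_sub, hp, Matrix.mulVec_mulVec, hAdag,
        Matrix.mulVec_mulVec, ← Matrix.mul_assoc, hinv', Matrix.one_mul, sub_self]
    rw [this]; rfl
  -- expansion in orthonormal basis
  have hexp : ∀ w : Fin n → ℝ, w = ∑ i, (u i ⬝ᵥ w) • u i := by
    intro w
    set U : Matrix (Fin n) (Fin n) ℝ := Matrix.of u with hU
    have hUU : U * Uᵀ = 1 := by
      ext i j
      simp only [Matrix.mul_apply, Matrix.transpose_apply, Matrix.one_apply, hU, Matrix.of_apply]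
      simpa [dotProduct] using hortho i j
    have hUU' : Uᵀ * U = 1 := mul_eq_one_comm.mp hUU
    have : Uᵀ *ᵥ (U *ᵥ w) = w := by
      rw [Matrix.mulVec_mulVec, hUU', Matrix.one_mulVec]
    conv_lhs => rw [← this]
    funext k
    simp [Matrix.mulVec, dotProduct, Finset.sum_apply, hU, mul_comm]
  have hruq : ∀ i : Fin n, (i : ℕ) < q → u i ⬝ᵥ r = 0 := by
    intro i hi
    have hui : u i ∈ Submodule.span ℝ (Set.range a) := by
      rw [← hspan]; exact Submodule.subset_span ⟨i, hi, rfl⟩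
    exact dot_zero_of_mem_span (v := r) (fun w hw => by
      obtain ⟨j, rfl⟩ := hw; exact hAr j) hui
  refine ⟨c, fun i => if q ≤ (i : ℕ) then max (u i ⬝ᵥ r) 0 else 0,
    fun i => if q ≤ (i : ℕ) then max (-(u i ⬝ᵥ r)) 0 else 0,
    fun i => by simpa [hc] using hy i,
    fun i => by dsimp only; split <;> simp,
    fun i => by dsimp only; split <;> simp,
    fun i hi => by constructor <;> (dsimp only; rw [if_neg (by omega)]),
    ?_⟩
  have key : ∀ i : Fin n, (if q ≤ (i : ℕ) then max (u i ⬝ᵥ r) 0 else 0) • u i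
      + (if q ≤ (i : ℕ) then max (-(u i ⬝ᵥ r)) 0 else 0) • (-(u i)) = (u i ⬝ᵥ r) • u i := by
    intro i
    by_cases hi : q ≤ (i : ℕ)
    · simp only [if_pos hi, smul_neg]
      rw [← sub_eq_add_neg, ← sub_smul]
      congr 1
      exact max_zero_sub_max_neg_zero_eq_self _
    · simp only [if_neg hi, zero_smul, smul_neg, neg_zero, add_zero]
      rw [hruq i (by omega), zero_smul]
  calc y = p + r := by rw [hr]; ring
    _ = (∑ i, c i • dhat i) + ∑ i, (u i ⬝ᵥ r) • u i := by rw [hsum1, ← hexp r]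
    _ = _ := by
        rw [add_assoc, ← Finset.sum_add_distrib]
        congr 1
        exact Finset.sum_congr rfl (fun i _ => (key i).symm)
end
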